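/- arXiv:1811.08871 — 2 statements merged into one kernel-verified Lean document; each statement's English description precedes it below -/
import Mathlib

section
/- Consider a game with a uniformly random hidden binary string s of length d, played in rounds: in each round a player submits a batch of b guesses, where each guess is a binary string of some length, and learns for each guess whether it is a prefix of s. A fully adaptive player (b = 1) can determine s in d rounds. Any player with batch size b, after r rounds, has learned at most r·⌈log₂(b+1)⌉ + r bits of information, hence determines s with probability at most 2^{r(⌈log₂(b+1)⌉+1) − d}. -/
open scoped Classical

/-- `isPref d s p` : whether the binary string `p` is a prefix of the hidden string
`s ∈ {0,1}^d`. -/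
def isPref (d : ℕ) (s : Fin d → Bool) (p : List Bool) : Bool :=
  if h : p.length ≤ d then
    decide (∀ i : Fin p.length, p.get i = s ⟨i, i.2.trans_le h⟩)
  else false

/-- Transcript of a batch strategy after `t` rounds: in each round the strategy submits a
batch of `b` prefix guesses (as a function of the answer vectors seen so far) and learns,
for each guess, whether it is a prefix of `s`. -/
def batchRun (d b : ℕ) (strat : List (Fin b → Bool) → (Fin b → List Bool))
    (s : Fin d → Bool) : ℕ → List (Fin b → Bool)
  | 0 => []
  | t + 1 =>
      batchRun d b strat s t ++
        [fun i => isPref d s (strat (batchRun d b strat s t) i)]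

lemma isPref_iff (d : ℕ) (s : Fin d → Bool) (p : List Bool) :
    isPref d s p = true ↔ p <+: List.ofFn s := by
  unfold isPref
  by_cases h : p.length ≤ d
  · rw [dif_pos h, decide_eq_true_eq]
    constructor
    · intro hp
      rw [List.prefix_iff_eq_take]
      apply List.ext_getElem
      · simp [h]
      · intro i h1 h2
        simp only [List.getElem_take, List.getElem_ofFn]
        simpa using hp ⟨i, h1⟩
    · intro hp i
      have := hp.getElem i.2
      simpa [List.get_eq_getElem] using this
  · rw [dif_neg h]
    refine iff_of_false (by simp) ?_
    intro hpre
    exact h (by simpa using hpre.length_le)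

noncomputable def encB {b : ℕ} (p : Fin b → List Bool) (a : Fin b → Bool) : Option (Fin b) :=
  if h : (Finset.univ.filter fun i => a i = true).Nonempty then
    some (Classical.choose (Finset.exists_max_image _ (fun i => (p i).length) h))
  else none

def decB {b : ℕ} (p : Fin b → List Bool) : Option (Fin b) → (Fin b → Bool)
  | none => fun _ => false
  | some m => fun i => decide (p i <+: p m)

lemma recoverB {d b : ℕ} (p : Fin b → List Bool) (s : Fin d → Bool) :
    decB p (encB p (fun i => isPref d s (p i))) = fun i => isPref d s (p i) := by
  set a : Fin b → Bool := fun i => isPref d s (p i) with ha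
  unfold encB
  by_cases h : (Finset.univ.filter fun i => a i = true).Nonempty
  · rw [dif_pos h]
    obtain ⟨hm, hmax⟩ := Classical.choose_spec (Finset.exists_max_image _ (fun i => (p i).length) h)
    set m := Classical.choose (Finset.exists_max_image _ (fun i => (p i).length) h)
    have ham : a m = true := by simpa using hm
    have hpm : p m <+: List.ofFn s := (isPref_iff d s (p m)).1 ham
    funext i
    show decide (p i <+: p m) = a i
    by_cases hi : a i = true
    · have hpi : p i <+: List.ofFn s := (isPref_iff d s (p i)).1 hi
      have hlen : (p i).length ≤ (p m).length := hmax i (by simpa using hi)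
      simp [hi, List.prefix_of_prefix_length_le hpi hpm hlen]
    · have hnp : ¬ (p i <+: p m) := by
        intro hpre
        exact hi ((isPref_iff d s (p i)).2 (hpre.trans hpm))
      rw [Bool.not_eq_true] at hi
      rw [hi, decide_eq_false hnp]
  · rw [dif_neg h]
    funext i
    show false = a i
    have : a i ≠ true := fun hi => h ⟨i, Finset.mem_filter.2 ⟨Finset.mem_univ _, hi⟩⟩
    exact (Bool.eq_false_iff.2 this).symm

noncomputable def codeRun (d b : ℕ) (strat : List (Fin b → Bool) → (Fin b → List Bool))
    (s : Fin d → Bool) : ℕ → List (Option (Fin b))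
  | 0 => []
  | t + 1 => codeRun d b strat s t ++
      [encB (strat (batchRun d b strat s t))
        (fun i => isPref d s (strat (batchRun d b strat s t) i))]

lemma codeRun_length (d b : ℕ) (strat : List (Fin b → Bool) → (Fin b → List Bool))
    (s : Fin d → Bool) (t : ℕ) : (codeRun d b strat s t).length = t := by
  induction t with
  | zero => rfl
  | succ t ih => simp [codeRun, ih]

lemma codeRun_inj (d b : ℕ) (strat : List (Fin b → Bool) → (Fin b → List Bool))
    (s s' : Fin d → Bool) (t : ℕ) (h : codeRun d b strat s t = codeRun d b strat s' t) :
    batchRun d b strat s t = batchRun d b strat s' t := by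
  induction t with
  | zero => rfl
  | succ t ih =>
    have hlen : (codeRun d b strat s t).length = (codeRun d b strat s' t).length := by
      rw [codeRun_length, codeRun_length]
    obtain ⟨h1, h2⟩ := List.append_inj h hlen
    have hrun : batchRun d b strat s t = batchRun d b strat s' t := ih h1
    have henc : encB (strat (batchRun d b strat s t))
          (fun i => isPref d s (strat (batchRun d b strat s t) i))
        = encB (strat (batchRun d b strat s t))
          (fun i => isPref d s' (strat (batchRun d b strat s t) i)) := by
      have := List.head_eq_of_cons_eq h2
      rw [← hrun] at this
      exact this
    have hans : (fun i => isPref d s (strat (batchRun d b strat s t) i))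
        = (fun i => isPref d s' (strat (batchRun d b strat s t) i)) := by
      rw [← recoverB (strat (batchRun d b strat s t)) s,
        ← recoverB (strat (batchRun d b strat s t)) s', henc]
    show batchRun d b strat s t ++ [fun i => isPref d s (strat (batchRun d b strat s t) i)]
        = batchRun d b strat s' t ++ [fun i => isPref d s' (strat (batchRun d b strat s' t) i)]
    rw [hrun] at hans
    rw [hrun, hans]

-- Part 1 strategy
def strat1 : List (Fin 1 → Bool) → (Fin 1 → List Bool) :=
  fun hist _ => (List.ofFn fun j : Fin hist.length => hist.get j 0) ++ [true]

def dec1 (d : ℕ) : List (Fin 1 → Bool) → (Fin d → Bool) :=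
  fun hist i => if h : (i : ℕ) < hist.length then hist.get ⟨i, h⟩ 0 else false

lemma batchRun1 (d : ℕ) (s : Fin d → Bool) :
    ∀ t (ht : t ≤ d), batchRun d 1 strat1 s t
      = List.ofFn (fun j : Fin t => fun _ : Fin 1 => s (Fin.castLE ht j)) := by
  intro t
  induction t with
  | zero => intro _; rfl
  | succ t ih =>
    intro ht
    have ht' : t ≤ d := Nat.le_of_succ_le ht
    have htd : t < d := ht
    show batchRun d 1 strat1 s t ++ _ = _
    rw [ih ht']
    have hguess : ∀ i : Fin 1, strat1 (List.ofFn (fun j : Fin t => fun _ : Fin 1 => s (Fin.castLE ht' j))) i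
        = (List.ofFn fun j : Fin t => s (Fin.castLE ht' j)) ++ [true] := by
      intro i
      unfold strat1
      congr 1
      apply List.ext_getElem
      · simp
      · intro n h1 h2
        simp [List.getElem_ofFn]
    have hofs : (List.ofFn fun j : Fin t => s (Fin.castLE ht' j)) = (List.ofFn s).take t := by
      apply List.ext_getElem
      · simp [ht']
      · intro n h1 h2
        simp [List.getElem_ofFn, List.getElem_take]
    have hans : isPref d s ((List.ofFn fun j : Fin t => s (Fin.castLE ht' j)) ++ [true])
        = s ⟨t, htd⟩ := by
      rw [hofs]
      by_cases hst : s ⟨t, htd⟩ = true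
      · rw [hst]
        rw [isPref_iff]
        have : (List.ofFn s).take t ++ [true] = (List.ofFn s).take (t + 1) := by
          rw [List.take_succ]
          congr 1
          have : (List.ofFn s)[t]? = some true := by
            rw [List.getElem?_eq_getElem (by simpa using htd)]
            simp [List.getElem_ofFn]
            exact hst
          rw [this]
          rfl
        rw [this]
        exact List.take_prefix _ _
      · rw [Bool.not_eq_true] at hst
        rw [hst]
        rw [← Bool.not_eq_true, isPref_iff]
        intro hpre
        have hlt : t < ((List.ofFn s).take t ++ [true]).length := by
          simp [ht']
        have := hpre.getElem hlt
        rw [List.getElem_append_right (by simp [ht'])] at this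
        simp [ht', List.getElem_ofFn] at this
        rw [hst] at this
        simp at this
    rw [List.ofFn_succ' (fun j : Fin (t+1) => fun _ : Fin 1 => s (Fin.castLE ht j)),
      List.concat_eq_append]
    refine congrArg₂ (· ++ ·) rfl ?_
    refine congrArg (fun x => [x]) ?_
    funext i
    rw [hguess i, hans]
    rfl

/-- Consider a game with a uniformly random hidden binary string `s` of
length `d`, played in rounds: in each round a player submits a batch of `b` guesses, each
a binary string, and learns for each guess whether it is a prefix of `s`. A fully adaptive
player (`b = 1`) can determine `s` in `d` rounds. Any player with batch size `b`, after
`r` rounds, has learned at most `r·⌈log₂(b+1)⌉ + r` bits of information, hence determines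
`s` with probability at most `2^{r(⌈log₂(b+1)⌉+1) − d}`. -/
theorem stmt4 (d b r : ℕ) (hb : 1 ≤ b) :
    (∃ (strat : List (Fin 1 → Bool) → (Fin 1 → List Bool))
       (dec : List (Fin 1 → Bool) → (Fin d → Bool)),
       ∀ s : Fin d → Bool, dec (batchRun d 1 strat s d) = s) ∧
    (∀ (strat : List (Fin b → Bool) → (Fin b → List Bool))
       (g : List (Fin b → Bool) → (Fin d → Bool)),
       ((Finset.univ.filter fun s : Fin d → Bool =>
           g (batchRun d b strat s r) = s).card : ℝ) / 2 ^ d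
         ≤ (2 : ℝ) ^ ((r * (Nat.clog 2 (b + 1) + 1) : ℤ) - (d : ℤ))) := by
  constructor
  · refine ⟨strat1, dec1 d, fun s => ?_⟩
    funext i
    rw [batchRun1 d s d le_rfl]
    unfold dec1
    have hlen : (List.ofFn (fun j : Fin d => fun _ : Fin 1 => s (Fin.castLE le_rfl j))).length = d := by
      simp
    rw [dif_pos (by rw [hlen]; exact i.2)]
    simp [List.get_ofFn]
  · intro strat g
    set S := Finset.univ.filter fun s : Fin d → Bool => g (batchRun d b strat s r) = s with hS
    set c := Nat.clog 2 (b + 1) with hc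
    -- card bound
    have hcard : S.card ≤ (b + 1) ^ r := by
      have := Finset.card_le_card_of_injOn
        (f := fun s : Fin d → Bool => fun j : Fin r =>
          (codeRun d b strat s r).get ⟨j, by rw [codeRun_length]; exact j.2⟩)
        (t := (Finset.univ : Finset (Fin r → Option (Fin b))))
        (fun a _ => Finset.mem_univ _)
        (fun s hs s' hs' h => by
          have hcode : codeRun d b strat s r = codeRun d b strat s' r := by
            apply List.ext_get (by rw [codeRun_length, codeRun_length])
            intro n h1 h2
            have hn : n < r := by rwa [codeRun_length] at h1
            have := congrFun h ⟨n, hn⟩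
            simpa using this
          have hrun := codeRun_inj d b strat s s' r hcode
          have hs1 : g (batchRun d b strat s r) = s := by
            have h1 : s ∈ S := Finset.mem_coe.1 hs
            rw [hS, Finset.mem_filter] at h1
            exact h1.2
          have hs2 : g (batchRun d b strat s' r) = s' := by
            have h1 : s' ∈ S := Finset.mem_coe.1 hs'
            rw [hS, Finset.mem_filter] at h1
            exact h1.2
          rw [← hs1, ← hs2, hrun])
      calc S.card ≤ (Finset.univ : Finset (Fin r → Option (Fin b))).card := this
        _ = (b + 1) ^ r := by simp [Finset.card_univ]
    have hpow : (b + 1) ^ r ≤ 2 ^ (r * (c + 1)) := by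
      calc (b + 1) ^ r ≤ (2 ^ c) ^ r := Nat.pow_le_pow_left (Nat.le_pow_clog (by norm_num) _) r
        _ = 2 ^ (c * r) := by rw [← pow_mul]
        _ ≤ 2 ^ (r * (c + 1)) := Nat.pow_le_pow_right (by norm_num)
            (by rw [Nat.mul_comm c r]; exact Nat.mul_le_mul_left r (Nat.le_succ c))
    have hcardR : (S.card : ℝ) ≤ 2 ^ (r * (c + 1)) := by
      have : (S.card : ℝ) ≤ ((b + 1) ^ r : ℕ) := by exact_mod_cast hcard
      calc (S.card : ℝ) ≤ ((b + 1) ^ r : ℕ) := this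
        _ ≤ ((2 ^ (r * (c + 1)) : ℕ) : ℝ) := by exact_mod_cast hpow
        _ = 2 ^ (r * (c + 1)) := by push_cast; ring
    have h2d : (0 : ℝ) < 2 ^ d := by positivity
    rw [div_le_iff₀ h2d]
    have : (2 : ℝ) ^ ((r * (c + 1) : ℤ) - (d : ℤ)) * 2 ^ d = 2 ^ (r * (c + 1)) := by
      rw [← zpow_natCast (2 : ℝ) d, ← zpow_add₀ (by norm_num : (2:ℝ) ≠ 0)]
      rw [sub_add_cancel, ← zpow_natCast (2 : ℝ) (r * (c + 1))]
      norm_num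
    rw [this]
    exact hcardR
end

section
/- In the prefix-guessing game with hidden uniform s ∈ {0,1}^d and batches of b prefix queries per round, the number of distinct possible answer vectors in a single round is at most b+1; consequently after r rounds the number of reachable transcript histories is at most (b+1)^r, and the probability of exactly identifying s after r rounds is at most (b+1)^r · 2^{−d} (times the number of final guesses allowed). -/
/-!
Within one batch, the queries answered "yes" are exactly the queries that are prefixes of the
longest "yes"-query (prefixes of `s` are totally ordered), so the answer vector is determined by
which query that is, or by the fact that there is none: at most `b + 1` vectors. A transcript
after `t + 1` rounds is a transcript after `t` rounds extended by one of these vectors, giving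
`(b + 1) ^ r` transcripts, and each transcript lets the player name at most `m` candidates.
-/

open scoped Classical

theorem isPref_eq_decide_isPrefix (d : ℕ) (s : Fin d → Bool) (p : List Bool) :
    isPref d s p = decide (p <+: List.ofFn s) := by
  rw [Bool.eq_iff_iff, decide_eq_true_iff, isPref]
  split_ifs with h
  · rw [decide_eq_true_iff]
    constructor
    · intro hall
      refine List.prefix_iff_eq_take.2 (List.ext_get (by simp [h]) fun n h₁ _ => ?_)
      simpa using hall ⟨n, h₁⟩
    · intro hp i
      simp [hp.getElem i.2]
  · simpa using fun hp : p <+: List.ofFn s => h (by simpa using hp.length_le)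

section PrefixChain

variable {ι α : Type*} [Fintype ι] [DecidableEq α]

def prefixChainAnswers (q : ι → List α) : Finset (ι → Bool) :=
  insert (fun _ => false) (Finset.univ.image fun j i => decide (q i <+: q j))

theorem card_prefixChainAnswers_le (q : ι → List α) :
    (prefixChainAnswers q).card ≤ Fintype.card ι + 1 :=
  (Finset.card_insert_le _ _).trans (Nat.add_le_add_right Finset.card_image_le _)

theorem prefixAnswers_mem_prefixChainAnswers (q : ι → List α) (l : List α) :
    (fun i => decide (q i <+: l)) ∈ prefixChainAnswers q := by
  set yes := Finset.univ.filter fun i => q i <+: l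
  rcases yes.eq_empty_or_nonempty with hnone | hsome
  · refine Finset.mem_insert.2 (Or.inl (funext fun i => ?_))
    simpa [yes] using Finset.filter_eq_empty_iff.1 hnone (Finset.mem_univ i)
  · obtain ⟨j, hj, hlongest⟩ := yes.exists_max_image (fun i => (q i).length) hsome
    have hjl : q j <+: l := (Finset.mem_filter.1 hj).2
    refine Finset.mem_insert_of_mem (Finset.mem_image.2 ⟨j, Finset.mem_univ _, funext fun i => ?_⟩)
    refine decide_eq_decide.2 ⟨fun hij => hij.trans hjl, fun hil => ?_⟩
    exact List.prefix_of_prefix_length_le hil hjl (hlongest i (by simpa [yes] using hil))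

end PrefixChain

theorem isPref_answers_mem_prefixChainAnswers {d b : ℕ} (batch : Fin b → List Bool)
    (s : Fin d → Bool) :
    (fun i => isPref d s (batch i)) ∈ prefixChainAnswers batch := by
  simp only [isPref_eq_decide_isPrefix]
  exact prefixAnswers_mem_prefixChainAnswers batch _

theorem card_image_isPref_answers_le (d b : ℕ) (batch : Fin b → List Bool) :
    (Finset.univ.image fun s : Fin d → Bool => fun i => isPref d s (batch i)).card ≤ b + 1 := by
  calc _ ≤ (prefixChainAnswers batch).card := Finset.card_le_card <| Finset.image_subset_iff.2
          fun s _ => isPref_answers_mem_prefixChainAnswers batch s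
    _ ≤ b + 1 := by simpa using card_prefixChainAnswers_le batch

theorem card_image_batchRun_le (d b r : ℕ) (strat : List (Fin b → Bool) → (Fin b → List Bool)) :
    (Finset.univ.image fun s : Fin d → Bool => batchRun d b strat s r).card ≤ (b + 1) ^ r := by
  induction r with
  | zero => exact Finset.card_le_one.2 (by simp [batchRun])
  | succ t ih =>
    let extensions h := (prefixChainAnswers (strat h)).image (h ++ [·])
    have hsub : (Finset.univ.image fun s => batchRun d b strat s (t + 1)) ⊆
        (Finset.univ.image fun s => batchRun d b strat s t).biUnion extensions :=
      Finset.image_subset_iff.2 fun s _ => Finset.mem_biUnion.2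
        ⟨_, Finset.mem_image_of_mem _ (Finset.mem_univ s),
          Finset.mem_image_of_mem _ (isPref_answers_mem_prefixChainAnswers _ s)⟩
    have hext : ∀ h ∈ Finset.univ.image fun s => batchRun d b strat s t,
        (extensions h).card ≤ b + 1 := fun h _ =>
      Finset.card_image_le.trans (by simpa using card_prefixChainAnswers_le (strat h))
    calc _ ≤ _ := Finset.card_le_card hsub
      _ ≤ _ := Finset.card_biUnion_le_card_mul _ _ _ hext
      _ ≤ (b + 1) ^ (t + 1) := by rw [pow_succ]; exact Nat.mul_le_mul_right _ ih

theorem card_filter_guessed_le (d b r m : ℕ)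
    (strat : List (Fin b → Bool) → (Fin b → List Bool))
    (g : List (Fin b → Bool) → Fin m → (Fin d → Bool)) :
    (Finset.univ.filter fun s : Fin d → Bool =>
       ∃ i : Fin m, g (batchRun d b strat s r) i = s).card ≤ (b + 1) ^ r * m := by
  have hsub : (Finset.univ.filter fun s => ∃ i, g (batchRun d b strat s r) i = s) ⊆
      (Finset.univ.image fun s => batchRun d b strat s r).biUnion
        fun h => Finset.univ.image (g h) := by
    intro s hs
    obtain ⟨i, hi⟩ := (Finset.mem_filter.1 hs).2
    exact Finset.mem_biUnion.2 ⟨_, Finset.mem_image_of_mem _ (Finset.mem_univ s),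
      Finset.mem_image.2 ⟨i, Finset.mem_univ _, hi⟩⟩
  calc _ ≤ _ := Finset.card_le_card hsub
    _ ≤ _ := Finset.card_biUnion_le_card_mul _ _ m fun h _ =>
        Finset.card_image_le.trans (Finset.card_fin m).le
    _ ≤ (b + 1) ^ r * m := Nat.mul_le_mul_right _ (card_image_batchRun_le d b r strat)

theorem stmt5_general (d b r m : ℕ)
    (strat : List (Fin b → Bool) → (Fin b → List Bool))
    (g : List (Fin b → Bool) → Fin m → (Fin d → Bool)) :
    (∀ batch : Fin b → List Bool,
       (Finset.univ.image fun s : Fin d → Bool =>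
         (fun i : Fin b => isPref d s (batch i))).card ≤ b + 1) ∧
    ((Finset.univ.image fun s : Fin d → Bool => batchRun d b strat s r).card
       ≤ (b + 1) ^ r) ∧
    (((Finset.univ.filter fun s : Fin d → Bool =>
         ∃ i : Fin m, g (batchRun d b strat s r) i = s).card : ℝ) / 2 ^ d
       ≤ ((b : ℝ) + 1) ^ r * (2 : ℝ) ^ (-(d : ℤ)) * m) := by
  refine ⟨card_image_isPref_answers_le d b, card_image_batchRun_le d b r strat, ?_⟩
  have hguessed : (_ : ℝ) ≤ ((b + 1) ^ r * m : ℕ) :=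
    Nat.cast_le.2 (card_filter_guessed_le d b r m strat g)
  rw [zpow_neg, zpow_natCast, div_eq_mul_inv, mul_right_comm]
  push_cast at hguessed
  gcongr

/-- In the prefix-guessing game with hidden uniform `s ∈ {0,1}^d` and batches
of `b` prefix queries per round, the number of distinct possible answer vectors in a
single round is at most `b+1`; consequently after `r` rounds the number of reachable
transcript histories is at most `(b+1)^r`, and the probability of exactly identifying `s`
after `r` rounds is at most `(b+1)^r · 2^{−d}` times the number `m` of final guesses
allowed. -/
theorem stmt5 (d b r m : ℕ) (hb : 1 ≤ b)
    (strat : List (Fin b → Bool) → (Fin b → List Bool))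
    (g : List (Fin b → Bool) → Fin m → (Fin d → Bool)) :
    (∀ batch : Fin b → List Bool,
       (Finset.univ.image fun s : Fin d → Bool =>
         (fun i : Fin b => isPref d s (batch i))).card ≤ b + 1) ∧
    ((Finset.univ.image fun s : Fin d → Bool => batchRun d b strat s r).card
       ≤ (b + 1) ^ r) ∧
    (((Finset.univ.filter fun s : Fin d → Bool =>
         ∃ i : Fin m, g (batchRun d b strat s r) i = s).card : ℝ) / 2 ^ d
       ≤ ((b : ℝ) + 1) ^ r * (2 : ℝ) ^ (-(d : ℤ)) * m) :=
  stmt5_general d b r m strat g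
end
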